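/- arXiv:1605.04135 — 8 statements merged into one kernel-verified Lean document; each statement's English description precedes it below -/
import Mathlib

section
/- Suppose a sequence of iterates (w_t) in W is generated by the exact alternating scheme: w_0 ∈ W is arbitrary, and for each t ≥ 0, with level v_t = P(w_t), the next iterate w_{t+1} ∈ W attains the supremum of the valuation, i.e. V(w_{t+1}, v_t) = sup_{w ∈ W} V(w, v_t). Let Δ_t = P* − P(w_t) denote the excess error at step t. Then for every t ≥ 0, Δ_t ≤ Δ_0 · (1 − m/M)^t. -/
/-- **CAN convergence (Theorem: exact alternating scheme).**
Let `W` be a nonempty set, `Pclass, Pquant : W → ℝ` with `Pclass > 0` and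
`m ≤ Pquant ≤ M` where `0 < m ≤ M`.  Define `P w = Pclass w / Pquant w`,
`P* = sup_W P` (assumed finite, i.e. an `IsLUB`), and the valuation
`V w v = Pclass w - v * Pquant w`.  If the iterates `w t` satisfy the exact
alternating scheme, i.e. `w (t+1)` attains the supremum of `V · (P (w t))`
over `W`, then the excess error `Δ t = P* - P (w t)` satisfies
`Δ t ≤ Δ 0 * (1 - m / M) ^ t`. -/
theorem can_convergence
    {W : Type*} [Nonempty W]
    (Pclass Pquant : W → ℝ) (m M : ℝ)
    (hm : 0 < m) (hmM : m ≤ M)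
    (hclass : ∀ w, 0 < Pclass w)
    (hquant : ∀ w, m ≤ Pquant w ∧ Pquant w ≤ M)
    (P : W → ℝ) (hP : ∀ w, P w = Pclass w / Pquant w)
    (V : W → ℝ → ℝ) (hV : ∀ w v, V w v = Pclass w - v * Pquant w)
    (Pstar : ℝ) (hPstar : IsLUB (Set.range P) Pstar)
    (w : ℕ → W)
    (hstep : ∀ t : ℕ,
      IsGreatest (Set.range fun w' => V w' (P (w t))) (V (w (t + 1)) (P (w t))))
    (t : ℕ) :
    Pstar - P (w t) ≤ (Pstar - P (w 0)) * (1 - m / M) ^ t := by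
  have hM : 0 < M := lt_of_lt_of_le hm hmM
  have hq : ∀ x : W, 0 < Pquant x := fun x => lt_of_lt_of_le hm (hquant x).1
  have hPmul : ∀ x : W, Pclass x = P x * Pquant x := by
    intro x; rw [hP x, div_mul_cancel₀ _ (ne_of_gt (hq x))]
  -- key contraction step
  have key : ∀ s : ℕ, Pstar - P (w (s+1)) ≤ (1 - m / M) * (Pstar - P (w s)) := by
    intro s
    set v := P (w s) with hv
    set u := w (s+1) with hu
    have hge : ∀ x : W, V x v ≤ V u v := by
      intro x
      exact (hstep s).2 ⟨x, rfl⟩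
    have hVineq : ∀ x : W, (P x - v) * Pquant x ≤ (P u - v) * Pquant u := by
      intro x
      have := hge x
      rw [hV, hV, hPmul, hPmul] at this
      nlinarith [this]
    have huv : 0 ≤ P u - v := by
      have h0 := hVineq (w s)
      simp only [← hv, sub_self, zero_mul] at h0
      nlinarith [hq u, h0]
    -- upper bound for all P x
    have hub : Pstar ≤ v + (M / m) * (P u - v) := by
      apply hPstar.2
      rintro _ ⟨x, rfl⟩
      rcases le_or_gt (P x) v with h | h
      · have : 0 ≤ (M / m) * (P u - v) := by positivity
        linarith
      · have h1 : (P x - v) * m ≤ (P x - v) * Pquant x := by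
          nlinarith [(hquant x).1]
        have h2 : (P u - v) * Pquant u ≤ (P u - v) * M := by
          nlinarith [(hquant u).2]
        have h3 : (P x - v) * m ≤ (P u - v) * M := le_trans h1 (le_trans (hVineq x) h2)
        have hgoal : P x - v ≤ M / m * (P u - v) := by
          rw [div_mul_eq_mul_div, le_div_iff₀ hm]; nlinarith
        linarith
    -- from hub: m/M * (Pstar - v) ≤ P u - v
    have : (m / M) * (Pstar - v) ≤ P u - v := by
      have h4 : Pstar - v ≤ (M / m) * (P u - v) := by linarith
      rw [div_mul_eq_mul_div, le_div_iff₀ hm] at h4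
      rw [div_mul_eq_mul_div, div_le_iff₀ hM]
      nlinarith
    have hMne : (M : ℝ) ≠ 0 := ne_of_gt hM
    have : Pstar - P u ≤ (1 - m / M) * (Pstar - v) := by
      have expand : (1 - m / M) * (Pstar - v) = (Pstar - v) - (m / M) * (Pstar - v) := by ring
      linarith
    exact this
  have hr0 : 0 ≤ 1 - m / M := by
    have : m / M ≤ 1 := (div_le_one hM).mpr hmM
    linarith
  have hΔ0 : 0 ≤ Pstar - P (w 0) := by
    have := hPstar.1 ⟨w 0, rfl⟩
    linarith
  induction t with
  | zero => simp
  | succ n ih =>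
    calc Pstar - P (w (n+1)) ≤ (1 - m / M) * (Pstar - P (w n)) := key n
      _ ≤ (1 - m / M) * ((Pstar - P (w 0)) * (1 - m / M) ^ n) := by
          exact mul_le_mul_of_nonneg_left ih hr0
      _ = (Pstar - P (w 0)) * (1 - m / M) ^ (n+1) := by ring
end

section
/- Fix w_t ∈ W, set v_t = P(w_t), and let e_t = sup_{w ∈ W} V(w, v_t). Then P* − P(w_t) ≤ e_t / m. -/
/-- **Claim: bound on distance to optimum.**
With `v_t = P w_t` and `e_t = sup_{w ∈ W} V (w, v_t)`, we have
`P* - P w_t ≤ e_t / m`. -/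
theorem can_bound_progress
    {W : Type*} [Nonempty W]
    (Pclass Pquant : W → ℝ) (m M : ℝ)
    (hm : 0 < m) (hmM : m ≤ M)
    (hclass : ∀ w, 0 < Pclass w)
    (hquant : ∀ w, m ≤ Pquant w ∧ Pquant w ≤ M)
    (P : W → ℝ) (hP : ∀ w, P w = Pclass w / Pquant w)
    (V : W → ℝ → ℝ) (hV : ∀ w v, V w v = Pclass w - v * Pquant w)
    (Pstar : ℝ) (hPstar : IsLUB (Set.range P) Pstar)
    (wt : W) (vt : ℝ) (hvt : vt = P wt)
    (et : ℝ) (het : IsLUB (Set.range fun w => V w vt) et) :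
    Pstar - P wt ≤ et / m := by
  have hq : ∀ w, 0 < Pquant w := fun w => lt_of_lt_of_le hm (hquant w).1
  have het0 : 0 ≤ et := by
    have h := het.1 (Set.mem_range_self wt)
    have : V wt vt = 0 := by
      rw [hV, hvt, hP, div_mul_cancel₀]
      · ring
      · exact (hq wt).ne'
    linarith
  have key : ∀ w, P w ≤ P wt + et / m := by
    intro w
    have hVle : V w vt ≤ et := het.1 (Set.mem_range_self w)
    have hVeq : V w vt = (P w - P wt) * Pquant w := by
      have h1 := (hq w).ne'
      have h2 := (hq wt).ne'
      rw [hV, hP, hP, hvt, hP]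
      field_simp
    have hle : (P w - P wt) * Pquant w ≤ et := hVeq ▸ hVle
    rcases le_or_gt (P w) (P wt) with h | h
    · have : 0 ≤ et / m := div_nonneg het0 hm.le
      linarith
    · have hmle : (P w - P wt) * m ≤ (P w - P wt) * Pquant w :=
        mul_le_mul_of_nonneg_left (hquant w).1 (by linarith)
      have h3 : (P w - P wt) * m ≤ et := le_trans hmle hle
      have h4 : P w - P wt ≤ et / m := (le_div_iff₀ hm).mpr h3
      linarith
  have : Pstar ≤ P wt + et / m := by
    apply hPstar.2
    rintro x ⟨w, rfl⟩
    exact key w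
  linarith
end

section
/- Fix w_t ∈ W, set v_t = P(w_t), let e_t = sup_{w ∈ W} V(w, v_t), and suppose w_{t+1} ∈ W attains this supremum, i.e. V(w_{t+1}, v_t) = e_t. Then P(w_{t+1}) ≥ P(w_t) + e_t / M. -/
/-- **Claim: sufficient progress.**
With `v_t = P w_t`, `e_t = sup_{w ∈ W} V (w, v_t)`, and `w_{t+1}` attaining this
supremum (`V (w_{t+1}, v_t) = e_t`), we have `P w_{t+1} ≥ P w_t + e_t / M`. -/
theorem can_sufficient_progress
    {W : Type*} [Nonempty W]
    (Pclass Pquant : W → ℝ) (m M : ℝ)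
    (hm : 0 < m) (hmM : m ≤ M)
    (hclass : ∀ w, 0 < Pclass w)
    (hquant : ∀ w, m ≤ Pquant w ∧ Pquant w ≤ M)
    (P : W → ℝ) (hP : ∀ w, P w = Pclass w / Pquant w)
    (V : W → ℝ → ℝ) (hV : ∀ w v, V w v = Pclass w - v * Pquant w)
    (Pstar : ℝ) (hPstar : IsLUB (Set.range P) Pstar)
    (wt : W) (vt : ℝ) (hvt : vt = P wt)
    (et : ℝ) (het : IsLUB (Set.range fun w => V w vt) et)
    (wt1 : W) (hwt1 : V wt1 vt = et) :
    P wt + et / M ≤ P wt1 := by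
  have hq1 := hquant wt1
  have hqt := hquant wt
  have hq1pos : 0 < Pquant wt1 := lt_of_lt_of_le hm hq1.1
  have hqtpos : 0 < Pquant wt := lt_of_lt_of_le hm hqt.1
  have hMpos : 0 < M := lt_of_lt_of_le hm hmM
  -- e_t ≥ 0
  have het0 : 0 ≤ et := by
    have hmem : V wt vt ∈ Set.range fun w => V w vt := ⟨wt, rfl⟩
    have := het.1 hmem
    have hvwt : V wt vt = 0 := by
      rw [hV, hvt, hP, div_mul_cancel₀ _ (ne_of_gt hqtpos)]
      ring
    linarith [this, hvwt.symm ▸ this]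
  -- Pclass wt1 = vt * Pquant wt1 + et
  have hkey : Pclass wt1 = vt * Pquant wt1 + et := by
    rw [hV] at hwt1; linarith
  rw [hP wt1, hkey, add_div, mul_div_cancel_right₀ _ (ne_of_gt hq1pos), ← hvt]
  gcongr
  exact hq1.2
end

section
/- P* < v_t holds if and only if e_t < 0. -/
theorem scan_robust_part3
    {W : Type*} [Nonempty W]
    (Pclass Pquant : W → ℝ) (m M : ℝ)
    (hm : 0 < m) (hmM : m ≤ M)
    (hclass : ∀ w, 0 < Pclass w)
    (hquant : ∀ w, m ≤ Pquant w ∧ Pquant w ≤ M)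
    (P : W → ℝ) (hP : ∀ w, P w = Pclass w / Pquant w)
    (V : W → ℝ → ℝ) (hV : ∀ w v, V w v = Pclass w - v * Pquant w)
    (Pstar : ℝ) (hPstar : IsLUB (Set.range P) Pstar)
    (wt : W) (δt : ℝ) (vt : ℝ) (hvt : vt = P wt + δt)
    (et : ℝ) (het : IsLUB (Set.range fun w => V w vt) et)
    :
    Pstar < vt ↔ et < 0 := by
  have hq0 : ∀ w, 0 < Pquant w := fun w => lt_of_lt_of_le hm (hquant w).1
  have hVeq : ∀ w, V w vt = Pquant w * (P w - vt) := by
    intro w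
    rw [hV, hP, mul_sub, mul_div_cancel₀ _ (ne_of_gt (hq0 w))]
    ring
  constructor
  · intro h
    have hub : ∀ x ∈ Set.range fun w => V w vt, x ≤ m * (Pstar - vt) := by
      rintro x ⟨w, rfl⟩
      simp only []
      rw [hVeq]
      have h1 : P w ≤ Pstar := hPstar.1 ⟨w, rfl⟩
      calc Pquant w * (P w - vt) ≤ Pquant w * (Pstar - vt) := by
            exact mul_le_mul_of_nonneg_left (by linarith) (le_of_lt (hq0 w))
        _ ≤ m * (Pstar - vt) := by nlinarith [(hquant w).1]
    have := het.2 hub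
    nlinarith
  · intro h
    have hub : ∀ x ∈ Set.range P, x ≤ vt + et / M := by
      rintro x ⟨w, rfl⟩
      have h1 : V w vt ≤ et := het.1 ⟨w, rfl⟩
      rw [hVeq] at h1
      have hM : 0 < M := lt_of_lt_of_le hm hmM
      have h2 : et / M ≥ et / Pquant w := by
        rw [ge_iff_le, div_le_div_iff₀ (hq0 w) hM]
        nlinarith [(hquant w).2]
      have h3 : P w - vt ≤ et / Pquant w := by
        rw [le_div_iff₀ (hq0 w)]; nlinarith
      linarith
    have h4 := hPstar.2 hub
    have hM : 0 < M := lt_of_lt_of_le hm hmM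
    have : et / M < 0 := div_neg_of_neg_of_pos h hM
    linarith
end

section
/- If e_t ≥ 0, then e_t ≥ m · (P* − v_t). -/
theorem scan_robust_part4
    {W : Type*} [Nonempty W]
    (Pclass Pquant : W → ℝ) (m M : ℝ)
    (hm : 0 < m) (hmM : m ≤ M)
    (hclass : ∀ w, 0 < Pclass w)
    (hquant : ∀ w, m ≤ Pquant w ∧ Pquant w ≤ M)
    (P : W → ℝ) (hP : ∀ w, P w = Pclass w / Pquant w)
    (V : W → ℝ → ℝ) (hV : ∀ w v, V w v = Pclass w - v * Pquant w)
    (Pstar : ℝ) (hPstar : IsLUB (Set.range P) Pstar)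
    (wt : W) (δt : ℝ) (vt : ℝ) (hvt : vt = P wt + δt)
    (et : ℝ) (het : IsLUB (Set.range fun w => V w vt) et)
    (he : 0 ≤ et) :
    m * (Pstar - vt) ≤ et := by
  have key : ∀ w, P w ≤ et / m + vt := by
    intro w
    have hq : 0 < Pquant w := lt_of_lt_of_le hm (hquant w).1
    have hVle : V w vt ≤ et := het.1 ⟨w, rfl⟩
    have hVw : V w vt = (P w - vt) * Pquant w := by
      rw [hV, hP]; field_simp
    by_cases hc : P w ≤ vt
    · have : 0 ≤ et / m := div_nonneg he hm.le
      linarith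
    · push_neg at hc
      have h1 : m * (P w - vt) ≤ Pquant w * (P w - vt) :=
        mul_le_mul_of_nonneg_right (hquant w).1 (by linarith)
      have h2 : m * (P w - vt) ≤ et := by
        rw [hVw] at hVle; nlinarith
      have h3 : P w - vt ≤ et / m := by
        rw [le_div_iff₀ hm]; linarith
      linarith
  have : Pstar ≤ et / m + vt := hPstar.2 (by rintro x ⟨w, rfl⟩; exact key w)
  calc m * (Pstar - vt) ≤ m * (et / m) := by
        exact mul_le_mul_of_nonneg_left (by linarith) hm.le
    _ = et := by field_simp
end

section
/- Consider one step of the noisy alternating scheme: given w_t ∈ W and a level-estimation error δ_t ∈ ℝ, set v_t = P(w_t) + δ_t, e_t = sup_{w ∈ W} V(w, v_t), and suppose the next iterate w_{t+1} ∈ W satisfies V(w_{t+1}, v_t) = e_t − ε_t for some optimization error ε_t ≥ 0. Let Δ_t = P* − P(w_t) and Δ_{t+1} = P* − P(w_{t+1}). Then Δ_{t+1} ≤ (1 − m/M)·Δ_t + (M/m)·|δ_t| + ε_t/m. -/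
set_option maxHeartbeats 1000000


/-- **Lemma: progress of CAN with noisy updates.**
One step of the noisy alternating scheme: `v_t = P w_t + δ_t`,
`e_t = sup_{w ∈ W} V (w, v_t)`, and `V (w_{t+1}, v_t) = e_t - ε_t` with `ε_t ≥ 0`.
Then `Δ_{t+1} ≤ (1 - m/M) Δ_t + (M/m) |δ_t| + ε_t / m`. -/
theorem can_noisy_progress
    {W : Type*} [Nonempty W]
    (Pclass Pquant : W → ℝ) (m M : ℝ)
    (hm : 0 < m) (hmM : m ≤ M)
    (hclass : ∀ w, 0 < Pclass w)
    (hquant : ∀ w, m ≤ Pquant w ∧ Pquant w ≤ M)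
    (P : W → ℝ) (hP : ∀ w, P w = Pclass w / Pquant w)
    (V : W → ℝ → ℝ) (hV : ∀ w v, V w v = Pclass w - v * Pquant w)
    (Pstar : ℝ) (hPstar : IsLUB (Set.range P) Pstar)
    (wt : W) (δt : ℝ) (vt : ℝ) (hvt : vt = P wt + δt)
    (et : ℝ) (het : IsLUB (Set.range fun w => V w vt) et)
    (εt : ℝ) (hεt : 0 ≤ εt)
    (wt1 : W) (hwt1 : V wt1 vt = et - εt) :
    Pstar - P wt1 ≤ (1 - m / M) * (Pstar - P wt) + M / m * |δt| + εt / m := by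
  obtain ⟨hm1, hM1⟩ := hquant wt1
  have hM0 : 0 < M := lt_of_lt_of_le hm hmM
  have hq0 : 0 < Pquant wt1 := lt_of_lt_of_le hm hm1
  have hΔ : 0 ≤ Pstar - P wt := sub_nonneg.2 (hPstar.1 ⟨wt, rfl⟩)
  have haM : m / M ≤ 1 := (div_le_one hM0).2 hmM
  have ha0 : 0 < m / M := div_pos hm hM0
  have hb1 : (1:ℝ) ≤ M / m := (one_le_div hm).2 hmM
  have hPwt1 : Pstar - P wt1 = (Pstar - vt) - (et - εt) / Pquant wt1 := by
    rw [hV] at hwt1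
    rw [hP]
    field_simp
    linarith
  have habs : 0 ≤ |δt| := abs_nonneg δt
  have hRHS1 : 0 ≤ (1 - m / M) * (Pstar - P wt) :=
    mul_nonneg (by linarith) hΔ
  have hRHS2 : 0 ≤ M / m * |δt| := mul_nonneg (by linarith) habs
  have hεm : εt / Pquant wt1 ≤ εt / m :=
    div_le_div_of_nonneg_left hεt hm hm1
  rw [hPwt1, sub_div et εt]
  rcases le_or_gt Pstar vt with hcase | hcase
  · -- D ≤ 0 : et ≥ M * (Pstar - vt)
    have hetA : M * (Pstar - vt) ≤ et := by
      refine le_of_forall_lt fun c hc => ?_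
      have hcM : vt + c / M < Pstar := by
        have : c / M < Pstar - vt := (div_lt_iff₀ hM0).2 (by linarith)
        linarith
      obtain ⟨_, ⟨w, rfl⟩, h1, h2⟩ := hPstar.exists_between hcM
      refine lt_of_lt_of_le (show c < V w vt from ?_) (het.1 ⟨w, rfl⟩)
      have hw := hquant w
      have hqw : Pquant w ≠ 0 := (lt_of_lt_of_le hm (hquant w).1).ne'
      have hcw : Pclass w = P w * Pquant w := by
        rw [hP w, div_mul_cancel₀ _ hqw]
      have hc2 : c < (P w - vt) * M := by
        have : c / M < P w - vt := by linarith
        exact (div_lt_iff₀ hM0).1 (by linarith)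
      have hnp : (M - Pquant w) * (P w - vt) ≤ 0 :=
        mul_nonpos_of_nonneg_of_nonpos (by linarith [hw.2]) (by linarith)
      rw [hV, hcw]
      nlinarith [hnp, hc2]
    rcases le_or_gt 0 et with het0 | het0
    · have h5 : 0 ≤ et / Pquant wt1 := div_nonneg het0 hq0.le
      linarith
    · -- et < 0
      have h5 : et / m ≤ et / Pquant wt1 := by
        rw [div_le_div_iff₀ hm hq0]
        nlinarith
      have h6 : M * (Pstar - vt) / m ≤ et / m :=
        (div_le_div_iff_of_pos_right hm).2 hetA
      have h7 : M / m * (δt - (Pstar - P wt)) ≤ M / m * |δt| :=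
        mul_le_mul_of_nonneg_left (by linarith [le_abs_self δt]) (by linarith)
      have h8 : M * (Pstar - vt) / m = M / m * ((Pstar - P wt) - δt) := by
        rw [hvt]; ring
      nlinarith [h5, h6, h7]
  · -- D > 0 : et ≥ m * (Pstar - vt)
    have hetB : m * (Pstar - vt) ≤ et := by
      refine le_of_forall_lt fun c hc => ?_
      have hcm : vt + max c 0 / m < Pstar := by
        rcases le_or_gt c 0 with h | h
        · rw [max_eq_right h]; simpa using hcase
        · rw [max_eq_left h.le]
          have : c / m < Pstar - vt := (div_lt_iff₀ hm).2 (by linarith)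
          linarith
      obtain ⟨_, ⟨w, rfl⟩, h1, h2⟩ := hPstar.exists_between hcm
      refine lt_of_lt_of_le (show c < V w vt from ?_) (het.1 ⟨w, rfl⟩)
      have hw := hquant w
      have hqw : Pquant w ≠ 0 := (lt_of_lt_of_le hm (hquant w).1).ne'
      have hcw : Pclass w = P w * Pquant w := by
        rw [hP w, div_mul_cancel₀ _ hqw]
      have hpos : 0 < P w - vt := by
        have : 0 ≤ max c 0 / m := div_nonneg (le_max_right c 0) hm.le
        linarith
      have hc2 : max c 0 < (P w - vt) * m := by
        have : max c 0 / m < P w - vt := by linarith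
        exact (div_lt_iff₀ hm).1 (by linarith)
      have hnn : 0 ≤ (Pquant w - m) * (P w - vt) :=
        mul_nonneg (by linarith [hw.1]) hpos.le
      rw [hV, hcw]
      nlinarith [hnn, hc2, le_max_left c 0]
    have het0 : 0 ≤ et := le_trans (mul_nonneg hm.le (by linarith)) hetB
    have h5 : et / M ≤ et / Pquant wt1 :=
      div_le_div_of_nonneg_left het0 hq0 hM1
    have h6 : m * (Pstar - vt) / M ≤ et / M :=
      (div_le_div_iff_of_pos_right hM0).2 hetB
    have h7a : (1 - m / M) * (-δt) ≤ (1 - m / M) * |δt| :=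
      mul_le_mul_of_nonneg_left (neg_le_abs δt) (by linarith)
    have h7b : (1 - m / M) * |δt| ≤ M / m * |δt| :=
      mul_le_mul_of_nonneg_right (by linarith) habs
    have h7 : (1 - m / M) * (-δt) ≤ M / m * |δt| := h7a.trans h7b
    have h8 : m * (Pstar - vt) / M = m / M * ((Pstar - P wt) - δt) := by
      rw [hvt]; ring
    nlinarith [h5, h6, h7]
end

section
/- Suppose the follow-the-leader (FTL) algorithm is run on the losses ℓ_1, …, ℓ_T: x_1 ∈ X is arbitrary and for each 1 ≤ t ≤ T, x_{t+1} ∈ X minimizes ∑_{τ=1}^{t} ℓ_τ(x) over x ∈ X. Then the regret satisfies ∑_{t=1}^{T} ℓ_t(x_t) − inf_{x ∈ X} ∑_{t=1}^{T} ℓ_t(x) ≤ (L²/α)·(3 + log T), where log denotes the natural logarithm. -/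
/-!
By the be-the-leader inequality the regret is at most `∑ₜ (ℓₜ(xₜ) - ℓₜ(xₜ₊₁))`. The leaders
`xₜ` and `xₜ₊₁` minimize the `(t - 1)α`- and `tα`-strongly convex cumulative losses `Fₜ₋₁` and
`Fₜ = Fₜ₋₁ + ℓₜ`, so `(2t - 1)α/2 ‖xₜ - xₜ₊₁‖² ≤ ℓₜ(xₜ) - ℓₜ(xₜ₊₁) ≤ L ‖xₜ - xₜ₊₁‖`, and the
`t`-th term is at most `2L² / ((2t - 1)α)`. Finally `∑ₜ 2 / (2t - 1) ≤ 2 + H_{T-1} ≤ 3 + log T`.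
-/

open Finset Filter Topology

section StrongConvexity

variable {E : Type*} [NormedAddCommGroup E] [NormedSpace ℝ E] {X : Set E} {f g : E → ℝ}
  {m n : ℝ} {y z w : E}

lemma StrongConvexOn.add (hf : StrongConvexOn X m f) (hg : StrongConvexOn X n g) :
    StrongConvexOn X (m + n) (f + g) := by
  have hmod : (fun r : ℝ => (m + n) / 2 * r ^ 2) =
      (fun r => m / 2 * r ^ 2) + fun r => n / 2 * r ^ 2 := by
    ext r
    simp only [Pi.add_apply]
    ring
  rw [StrongConvexOn, hmod]
  exact UniformConvexOn.add hf hg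

lemma StrongConvexOn.sum {ι : Type*} {s : Finset ι} {f : ι → E → ℝ} (hX : Convex ℝ X)
    (h : ∀ i ∈ s, StrongConvexOn X m (f i)) :
    StrongConvexOn X (#s * m) (fun z => ∑ i ∈ s, f i z) := by
  classical
  induction s using Finset.induction_on with
  | empty => simpa using convexOn_const 0 hX
  | insert a s ha ih =>
    rw [card_insert_of_notMem ha, Nat.cast_succ, add_one_mul, add_comm]
    simp_rw [sum_insert ha]
    exact (h a (mem_insert_self a s)).add (ih fun i hi => h i (mem_insert_of_mem hi))

lemma StrongConvexOn.sq_norm_sub_le_of_isMinOn (hf : StrongConvexOn X m f) (hz : z ∈ X)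
    (hmin : IsMinOn f X z) (hy : y ∈ X) : m / 2 * ‖y - z‖ ^ 2 ≤ f y - f z := by
  -- Compare `f z` with `f` at `(1 - t) • z + t • y` and divide by `t`; then let `t → 0`.
  have hstep : ∀ t ∈ Set.Ioo (0 : ℝ) 1, (1 - t) * (m / 2 * ‖y - z‖ ^ 2) ≤ f y - f z := by
    rintro t ⟨ht0, ht1⟩
    have hab : 1 - t + t = 1 := sub_add_cancel 1 t
    have hconv := hf.2 hz hy (sub_nonneg.2 ht1.le) ht0.le hab
    have hle := isMinOn_iff.1 hmin _ (hf.1 hz hy (sub_nonneg.2 ht1.le) ht0.le hab)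
    rw [norm_sub_rev] at hconv
    simp only [smul_eq_mul] at hconv
    refine le_of_mul_le_mul_left ?_ ht0
    linarith
  have hlim : Tendsto (fun t : ℝ => (1 - t) * (m / 2 * ‖y - z‖ ^ 2)) (𝓝[>] 0)
      (𝓝 (m / 2 * ‖y - z‖ ^ 2)) := by
    have : Continuous fun t : ℝ => (1 - t) * (m / 2 * ‖y - z‖ ^ 2) := by fun_prop
    simpa using this.continuousWithinAt (s := Set.Ioi 0) (x := 0) |>.tendsto
  exact le_of_tendsto hlim (eventually_of_mem (Ioo_mem_nhdsGT one_pos) hstep)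

lemma StrongConvexOn.sq_norm_sub_le_of_isMinOn_add (hf : StrongConvexOn X m f)
    (hfg : StrongConvexOn X n (f + g)) (hz : z ∈ X) (hw : w ∈ X) (hzmin : IsMinOn f X z)
    (hwmin : IsMinOn (f + g) X w) : (m + n) / 2 * ‖z - w‖ ^ 2 ≤ g z - g w := by
  have hf' := hf.sq_norm_sub_le_of_isMinOn hz hzmin hw
  have hfg' := hfg.sq_norm_sub_le_of_isMinOn hw hwmin hz
  rw [norm_sub_rev] at hf'
  simp only [Pi.add_apply] at hfg'
  linarith

end StrongConvexity

lemma le_sq_div_of_mul_sq_le_of_le_mul {c D g L : ℝ} (hc : 0 < c) (hlow : c * D ^ 2 ≤ g)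
    (hup : g ≤ L * D) : g ≤ L ^ 2 / c := by
  rw [le_div_iff₀ hc]
  -- AM-GM: `c L D ≤ (c² D² + L²) / 2 ≤ (c g + L²) / 2`.
  nlinarith [sq_nonneg (c * D - L)]

lemma sum_Icc_two_div_two_mul_sub_one_le_two_add_harmonic (n : ℕ) :
    ∑ t ∈ Icc 1 (n + 1), 2 / (2 * (t : ℝ) - 1) ≤ 2 + harmonic n := by
  induction n with
  | zero => norm_num
  | succ n ih =>
    rw [sum_Icc_succ_top (by omega), harmonic_succ]
    have hterm : 2 / (2 * ((n + 1 + 1 : ℕ) : ℝ) - 1) ≤ ((n + 1 : ℕ) : ℝ)⁻¹ := by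
      rw [inv_eq_one_div, div_le_div_iff₀ (by push_cast; linarith) (by positivity)]
      push_cast
      linarith
    push_cast at ih hterm ⊢
    linarith

lemma sum_Icc_two_div_two_mul_sub_one_le (T : ℕ) :
    ∑ t ∈ Icc 1 T, 2 / (2 * (t : ℝ) - 1) ≤ 3 + Real.log T := by
  rcases T with _ | n
  · norm_num
  · have hlog : Real.log n ≤ Real.log (n + 1 : ℕ) := by
      rcases n.eq_zero_or_pos with rfl | hn
      · simp
      · exact Real.log_le_log (by positivity) (by push_cast; linarith)
    linarith [sum_Icc_two_div_two_mul_sub_one_le_two_add_harmonic n, harmonic_le_one_add_log n]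

section FollowTheLeader

variable {β : Type*} {X : Set β} {ℓ : ℕ → β → ℝ} {T : ℕ} {x : ℕ → β}

def cumLoss (ℓ : ℕ → β → ℝ) (t : ℕ) (z : β) : ℝ := ∑ τ ∈ Icc 1 t, ℓ τ z

lemma cumLoss_succ (ℓ : ℕ → β → ℝ) (t : ℕ) : cumLoss ℓ (t + 1) = cumLoss ℓ t + ℓ (t + 1) := by
  ext z
  exact sum_Icc_succ_top (by omega) _

def IsFTL (X : Set β) (ℓ : ℕ → β → ℝ) (T : ℕ) (x : ℕ → β) : Prop :=
  x 1 ∈ X ∧ ∀ t ∈ Icc 1 T, x (t + 1) ∈ X ∧ IsMinOn (cumLoss ℓ t) X (x (t + 1))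

namespace IsFTL

lemma mem (h : IsFTL X ℓ T x) {t : ℕ} (ht : t ∈ Icc 1 (T + 1)) : x t ∈ X := by
  obtain ⟨ht1, htT⟩ := mem_Icc.1 ht
  rcases t with _ | _ | t
  · omega
  · exact h.1
  · exact (h.2 (t + 1) (mem_Icc.2 ⟨by omega, by omega⟩)).1

lemma isMinOn (h : IsFTL X ℓ T x) {t : ℕ} (ht : t ≤ T) :
    IsMinOn (cumLoss ℓ t) X (x (t + 1)) := by
  rcases t with _ | t
  · exact isMinOn_iff.2 fun _ _ => by simp [cumLoss]
  · exact (h.2 (t + 1) (mem_Icc.2 ⟨by omega, ht⟩)).2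

lemma sum_le_cumLoss (h : IsFTL X ℓ T x) {y : β} (hy : y ∈ X) {t : ℕ} (ht : t ≤ T) :
    ∑ τ ∈ Icc 1 t, ℓ τ (x (τ + 1)) ≤ cumLoss ℓ t y := by
  induction t generalizing y with
  | zero => simp [cumLoss]
  | succ t ih =>
    have hnext : x (t + 1 + 1) ∈ X := h.mem (mem_Icc.2 ⟨by omega, by omega⟩)
    calc ∑ τ ∈ Icc 1 (t + 1), ℓ τ (x (τ + 1))
        = ∑ τ ∈ Icc 1 t, ℓ τ (x (τ + 1)) + ℓ (t + 1) (x (t + 1 + 1)) :=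
          sum_Icc_succ_top (by omega) _
      _ ≤ cumLoss ℓ (t + 1) (x (t + 1 + 1)) := by
          rw [cumLoss_succ, Pi.add_apply]
          exact add_le_add_left (ih hnext (by omega)) _
      _ ≤ cumLoss ℓ (t + 1) y := isMinOn_iff.1 (h.isMinOn ht) y hy

lemma regret_le_sum_sub (h : IsFTL X ℓ T x) {y : β} (hy : y ∈ X) :
    ∑ t ∈ Icc 1 T, ℓ t (x t) - cumLoss ℓ T y ≤ ∑ t ∈ Icc 1 T, (ℓ t (x t) - ℓ t (x (t + 1))) := by
  rw [sum_sub_distrib]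
  linarith [h.sum_le_cumLoss hy le_rfl]

end IsFTL

end FollowTheLeader

section StronglyConvexLosses

variable {E : Type*} [NormedAddCommGroup E] [NormedSpace ℝ E] {X : Set E} {ℓ : ℕ → E → ℝ}
  {T : ℕ} {x : ℕ → E} {α L : ℝ}

lemma strongConvexOn_cumLoss (hX : Convex ℝ X) (hsc : ∀ t ∈ Icc 1 T, StrongConvexOn X α (ℓ t))
    {t : ℕ} (ht : t ≤ T) : StrongConvexOn X (t * α) (cumLoss ℓ t) := by
  have hsum := StrongConvexOn.sum hX fun τ hτ => hsc τ (Icc_subset_Icc_right ht hτ)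
  rwa [Nat.card_Icc, Nat.add_sub_cancel] at hsum

namespace IsFTL

lemma sq_norm_sub_next_le (h : IsFTL X ℓ T x) (hX : Convex ℝ X)
    (hsc : ∀ t ∈ Icc 1 T, StrongConvexOn X α (ℓ t)) {t : ℕ} (ht : t ∈ Icc 1 T) :
    (2 * t - 1) * α / 2 * ‖x t - x (t + 1)‖ ^ 2 ≤ ℓ t (x t) - ℓ t (x (t + 1)) := by
  obtain ⟨ht1, htT⟩ := mem_Icc.1 ht
  obtain ⟨s, rfl⟩ : ∃ s, t = s + 1 := ⟨t - 1, by omega⟩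
  have hstab := (strongConvexOn_cumLoss hX hsc (by omega : s ≤ T)).sq_norm_sub_le_of_isMinOn_add
    (cumLoss_succ ℓ s ▸ strongConvexOn_cumLoss hX hsc htT)
    (h.mem (mem_Icc.2 ⟨ht1, by omega⟩)) (h.mem (mem_Icc.2 ⟨by omega, by omega⟩))
    (h.isMinOn (by omega)) (cumLoss_succ ℓ s ▸ h.isMinOn htT)
  convert hstab using 2
  push_cast
  ring

lemma loss_sub_loss_next_le (h : IsFTL X ℓ T x) (hX : Convex ℝ X) (hα : 0 < α)
    (hsc : ∀ t ∈ Icc 1 T, StrongConvexOn X α (ℓ t))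
    (hlip : ∀ t ∈ Icc 1 T, ∀ x ∈ X, ∀ y ∈ X, |ℓ t x - ℓ t y| ≤ L * ‖x - y‖)
    {t : ℕ} (ht : t ∈ Icc 1 T) :
    ℓ t (x t) - ℓ t (x (t + 1)) ≤ L ^ 2 / α * (2 / (2 * t - 1)) := by
  obtain ⟨ht1, htT⟩ := mem_Icc.1 ht
  have hlin : ℓ t (x t) - ℓ t (x (t + 1)) ≤ L * ‖x t - x (t + 1)‖ :=
    (le_abs_self _).trans (hlip t ht _ (h.mem (mem_Icc.2 ⟨ht1, by omega⟩))
      _ (h.mem (mem_Icc.2 ⟨by omega, by omega⟩)))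
  have ht1' : (1 : ℝ) ≤ t := by exact_mod_cast ht1
  calc ℓ t (x t) - ℓ t (x (t + 1)) ≤ L ^ 2 / ((2 * t - 1) * α / 2) :=
        le_sq_div_of_mul_sq_le_of_le_mul (by nlinarith) (h.sq_norm_sub_next_le hX hsc ht) hlin
    _ = L ^ 2 / α * (2 / (2 * t - 1)) := by
        field_simp

end IsFTL

end StronglyConvexLosses

theorem ftl_regret_strongly_convex_general
    {d : ℕ} (X : Set (EuclideanSpace ℝ (Fin d)))
    (hXconv : Convex ℝ X)
    (α L : ℝ) (hα : 0 < α)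
    (T : ℕ)
    (ℓ : ℕ → EuclideanSpace ℝ (Fin d) → ℝ)
    (hsc : ∀ t ∈ Finset.Icc 1 T, StrongConvexOn X α (ℓ t))
    (hlip : ∀ t ∈ Finset.Icc 1 T, ∀ x ∈ X, ∀ y ∈ X, |ℓ t x - ℓ t y| ≤ L * ‖x - y‖)
    (x : ℕ → EuclideanSpace ℝ (Fin d)) (hx1 : x 1 ∈ X)
    (hmin : ∀ t ∈ Finset.Icc 1 T, x (t + 1) ∈ X ∧
      ∀ y ∈ X, ∑ τ ∈ Finset.Icc 1 t, ℓ τ (x (t + 1)) ≤ ∑ τ ∈ Finset.Icc 1 t, ℓ τ y) :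
    ∀ y ∈ X,
      ∑ t ∈ Finset.Icc 1 T, ℓ t (x t) - ∑ t ∈ Finset.Icc 1 T, ℓ t y ≤
        L ^ 2 / α * (3 + Real.log T) := by
  intro y hy
  have hftl : IsFTL X ℓ T x :=
    ⟨hx1, fun t ht => ⟨(hmin t ht).1, isMinOn_iff.2 (hmin t ht).2⟩⟩
  calc ∑ t ∈ Icc 1 T, ℓ t (x t) - cumLoss ℓ T y
      ≤ ∑ t ∈ Icc 1 T, (ℓ t (x t) - ℓ t (x (t + 1))) := hftl.regret_le_sum_sub hy
    _ ≤ ∑ t ∈ Icc 1 T, L ^ 2 / α * (2 / (2 * t - 1)) :=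
        sum_le_sum fun t ht => hftl.loss_sub_loss_next_le hXconv hα hsc hlip ht
    _ = L ^ 2 / α * ∑ t ∈ Icc 1 T, 2 / (2 * (t : ℝ) - 1) := (mul_sum _ _ _).symm
    _ ≤ L ^ 2 / α * (3 + Real.log T) :=
        mul_le_mul_of_nonneg_left (sum_Icc_two_div_two_mul_sub_one_le T) (by positivity)

/-- **FTL regret bound for strongly convex, Lipschitz losses.**
If the follow-the-leader algorithm is run on losses `ℓ 1, …, ℓ T`, each
`α`-strongly convex and `L`-Lipschitz on a nonempty convex set `X ⊆ ℝ^d`, with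
`x (t+1)` minimizing the cumulative loss `∑_{τ=1}^t ℓ τ` over `X`, then the
regret is at most `(L² / α) * (3 + log T)`. -/
theorem ftl_regret_strongly_convex
    {d : ℕ} (X : Set (EuclideanSpace ℝ (Fin d)))
    (hXne : X.Nonempty) (hXconv : Convex ℝ X)
    (α L : ℝ) (hα : 0 < α) (hL : 0 ≤ L)
    (T : ℕ) (hT : 1 ≤ T)
    (ℓ : ℕ → EuclideanSpace ℝ (Fin d) → ℝ)
    (hsc : ∀ t ∈ Finset.Icc 1 T, StrongConvexOn X α (ℓ t))
    (hlip : ∀ t ∈ Finset.Icc 1 T, ∀ x ∈ X, ∀ y ∈ X, |ℓ t x - ℓ t y| ≤ L * ‖x - y‖)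
    (x : ℕ → EuclideanSpace ℝ (Fin d)) (hx1 : x 1 ∈ X)
    (hmin : ∀ t ∈ Finset.Icc 1 T, x (t + 1) ∈ X ∧
      ∀ y ∈ X, ∑ τ ∈ Finset.Icc 1 t, ℓ τ (x (t + 1)) ≤ ∑ τ ∈ Finset.Icc 1 t, ℓ τ y) :
    ∀ y ∈ X,
      ∑ t ∈ Finset.Icc 1 T, ℓ t (x t) - ∑ t ∈ Finset.Icc 1 T, ℓ t y ≤
        L ^ 2 / α * (3 + Real.log T) :=
  ftl_regret_strongly_convex_general X hXconv α L hα T ℓ hsc hlip x hx1 hmin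
end

section
/- Fix 1 ≤ t ≤ T, and suppose x_t ∈ X minimizes ∑_{τ=1}^{t−1} ℓ_τ(x) over x ∈ X and x_{t+1} ∈ X minimizes ∑_{τ=1}^{t} ℓ_τ(x) over x ∈ X. Then the consecutive FTL iterates satisfy the stability bound ‖x_t − x_{t+1}‖ ≤ 2L/(α·(2t − 1)). -/
open Finset

/-- Sum of `α`-strongly convex functions over a finset is `card • α`-strongly convex. -/
lemma sum_strongConvexOn {E : Type*} [NormedAddCommGroup E] [NormedSpace ℝ E]
    {X : Set E} (hX : Convex ℝ X) {α : ℝ} (ℓ : ℕ → E → ℝ) (s : Finset ℕ)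
    (h : ∀ τ ∈ s, StrongConvexOn X α (ℓ τ)) :
    StrongConvexOn X ((s.card : ℝ) * α) (fun x => ∑ τ ∈ s, ℓ τ x) := by
  refine ⟨hX, fun x hx y hy a b ha hb hab => ?_⟩
  simp only [smul_eq_mul, Finset.mul_sum]
  calc ∑ τ ∈ s, ℓ τ (a • x + b • y)
      ≤ ∑ τ ∈ s, (a * ℓ τ x + b * ℓ τ y - a * b * (α / 2 * ‖x - y‖ ^ 2)) :=
        Finset.sum_le_sum fun τ hτ => by
          simpa using (h τ hτ).2 hx hy ha hb hab
    _ = _ := by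
        rw [Finset.sum_sub_distrib, Finset.sum_add_distrib, Finset.sum_const,
          ← Finset.mul_sum, ← Finset.mul_sum, nsmul_eq_mul]
        ring

/-- Quadratic growth at a minimizer of a strongly convex function. -/
lemma strongConvexOn_min {E : Type*} [NormedAddCommGroup E] [NormedSpace ℝ E]
    {X : Set E} {m : ℝ} {f : E → ℝ} (hf : StrongConvexOn X m f)
    {x y : E} (hx : x ∈ X) (hy : y ∈ X) (hmin : ∀ z ∈ X, f x ≤ f z) :
    m / 2 * ‖x - y‖ ^ 2 ≤ f y - f x := by
  have key : ∀ a : ℝ, a ∈ Set.Ioo (0:ℝ) 1 →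
      (1 - a) * (m / 2 * ‖x - y‖ ^ 2) ≤ f y - f x := by
    rintro a ⟨ha0, ha1⟩
    have hb : (0:ℝ) ≤ 1 - a := by linarith
    have hz : a • y + (1 - a) • x ∈ X := hf.1 hy hx ha0.le hb (by ring)
    have h1 := hf.2 hy hx ha0.le hb (by ring)
    have h2 := hmin _ hz
    rw [norm_sub_rev y x] at h1
    simp only [smul_eq_mul] at h1
    nlinarith [mul_pos ha0 (sub_pos.mpr ha1)]
  have htend : Filter.Tendsto (fun a : ℝ => (1 - a) * (m / 2 * ‖x - y‖ ^ 2))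
      (nhdsWithin 0 (Set.Ioi 0)) (nhds (m / 2 * ‖x - y‖ ^ 2)) := by
    have hc : Filter.Tendsto (fun a : ℝ => (1 - a) * (m / 2 * ‖x - y‖ ^ 2))
        (nhds 0) (nhds ((1 - 0) * (m / 2 * ‖x - y‖ ^ 2))) :=
      (Continuous.mul (continuous_const.sub continuous_id) continuous_const).tendsto 0
    simpa using hc.mono_left nhdsWithin_le_nhds
  refine le_of_tendsto htend ?_
  filter_upwards [Ioo_mem_nhdsGT_of_mem (Set.mem_Ico.mpr ⟨le_refl (0:ℝ), one_pos⟩)] with a ha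
  exact key a ha

/-- **FTL stability bound.**
If each `ℓ τ` is `α`-strongly convex and `L`-Lipschitz on the nonempty convex
set `X ⊆ ℝ^d`, `x t ∈ X` minimizes `∑_{τ=1}^{t-1} ℓ τ` over `X` and
`x (t+1) ∈ X` minimizes `∑_{τ=1}^{t} ℓ τ` over `X`, then
`‖x t - x (t+1)‖ ≤ 2L / (α (2t - 1))`. -/
theorem ftl_stability
    {d : ℕ} (X : Set (EuclideanSpace ℝ (Fin d)))
    (hXne : X.Nonempty) (hXconv : Convex ℝ X)
    (α L : ℝ) (hα : 0 < α) (hL : 0 ≤ L)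
    (T : ℕ) (ℓ : ℕ → EuclideanSpace ℝ (Fin d) → ℝ)
    (hsc : ∀ τ ∈ Finset.Icc 1 T, StrongConvexOn X α (ℓ τ))
    (hlip : ∀ τ ∈ Finset.Icc 1 T, ∀ x ∈ X, ∀ y ∈ X, |ℓ τ x - ℓ τ y| ≤ L * ‖x - y‖)
    (t : ℕ) (ht1 : 1 ≤ t) (htT : t ≤ T)
    (xt xt1 : EuclideanSpace ℝ (Fin d)) (hxt : xt ∈ X) (hxt1 : xt1 ∈ X)
    (hxtmin : ∀ y ∈ X, ∑ τ ∈ Finset.Icc 1 (t - 1), ℓ τ xt ≤ ∑ τ ∈ Finset.Icc 1 (t - 1), ℓ τ y)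
    (hxt1min : ∀ y ∈ X, ∑ τ ∈ Finset.Icc 1 t, ℓ τ xt1 ≤ ∑ τ ∈ Finset.Icc 1 t, ℓ τ y) :
    ‖xt - xt1‖ ≤ 2 * L / (α * (2 * (t : ℝ) - 1)) := by
  have hsub1 : ∀ τ ∈ Finset.Icc 1 (t - 1), StrongConvexOn X α (ℓ τ) := fun τ hτ => by
    refine hsc τ ?_
    simp only [Finset.mem_Icc] at *
    exact ⟨hτ.1, hτ.2.trans ((Nat.sub_le t 1).trans htT)⟩
  have hsub2 : ∀ τ ∈ Finset.Icc 1 t, StrongConvexOn X α (ℓ τ) := fun τ hτ => by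
    refine hsc τ ?_
    simp only [Finset.mem_Icc] at *
    exact ⟨hτ.1, hτ.2.trans htT⟩
  have hF := sum_strongConvexOn hXconv ℓ (Finset.Icc 1 (t - 1)) hsub1
  have hG := sum_strongConvexOn hXconv ℓ (Finset.Icc 1 t) hsub2
  rw [Nat.card_Icc] at hF hG
  have h1 := strongConvexOn_min hF hxt hxt1 hxtmin
  have h2 := strongConvexOn_min hG hxt1 hxt hxt1min
  -- split the sum over Icc 1 t
  have hsplit : ∀ z, ∑ τ ∈ Finset.Icc 1 t, ℓ τ z
      = ∑ τ ∈ Finset.Icc 1 (t - 1), ℓ τ z + ℓ t z := by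
    intro z
    have : t = (t - 1) + 1 := (Nat.succ_pred_eq_of_pos ht1).symm
    rw [this, Finset.sum_Icc_succ_top (by omega)]
    simp [Nat.add_sub_cancel]
  rw [hsplit xt, hsplit xt1] at h2
  have hlipb := hlip t (Finset.mem_Icc.mpr ⟨ht1, htT⟩) xt hxt xt1 hxt1
  have habs : ℓ t xt - ℓ t xt1 ≤ L * ‖xt - xt1‖ :=
    (le_abs_self _).trans hlipb
  set r := ‖xt - xt1‖ with hr
  have hr' : ‖xt1 - xt‖ = r := by rw [hr, norm_sub_rev]
  rw [hr'] at h2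
  have hcast1 : ((t - 1 + 1 - 1 : ℕ) : ℝ) = (t : ℝ) - 1 := by
    push_cast [Nat.sub_add_cancel ht1, Nat.cast_sub ht1]; ring
  have hcast2 : ((t + 1 - 1 : ℕ) : ℝ) = (t : ℝ) := by push_cast [Nat.add_sub_cancel]; ring
  rw [hcast1] at h1
  rw [hcast2] at h2
  have ht1' : (1 : ℝ) ≤ (t : ℝ) := by exact_mod_cast ht1
  have hc : 0 < α * (2 * (t : ℝ) - 1) := by
    apply mul_pos hα; linarith
  have hkey : α * (2 * (t : ℝ) - 1) / 2 * r ^ 2 ≤ L * r := by nlinarith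
  rcases eq_or_lt_of_le (norm_nonneg (xt - xt1)) with h0 | h0
  · rw [← hr] at h0
    rw [← h0]; positivity
  · rw [← hr] at h0
    rw [le_div_iff₀ hc]
    nlinarith
end
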